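/- Let x ∈ ℝⁿ with v(x) = 0, let ρ > 0, let H be a symmetric positive semidefinite n×n matrix, and let X ⊆ ℝⁿ be a convex set with 0 in its interior. Suppose d = 0 minimizes J(d,ρ;x) := ρ⟨∇f(x),d⟩ + ½⟨d,Hd⟩ + Σ_{i=1}^{m̄} |cᵢ(x)+⟨∇cᵢ(x),d⟩| + Σ_{i=m̄+1}^{m} max(cᵢ(x)+⟨∇cᵢ(x),d⟩, 0) over d ∈ X. Then x is a KKT point of the NLP: there exists λ ∈ ℝᵐ such that ∇f(x) + Σ_{i=1}^m λᵢ∇cᵢ(x) = 0, λᵢ ≥ 0 for all i ∈ {m̄+1,…,m}, and λᵢ cᵢ(x) = 0 for all i ∈ {m̄+1,…,m}. -/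
import Mathlib


open scoped RealInnerProductSpace
open Finset Filter
open scoped Topology

noncomputable section

/-- `ℝⁿ` with the Euclidean norm. -/
abbrev Evec (n : ℕ) : Type := EuclideanSpace ℝ (Fin n)

variable {n m : ℕ}

/-- Apply a matrix to a Euclidean vector. -/
def matApply (M : Matrix (Fin n) (Fin n) ℝ) (x : Evec n) : Evec n := Matrix.toEuclideanLin M x

/-- Constraint violation measure `v(x) = Σ_{i≤m̄} |cᵢ(x)| + Σ_{i>m̄} max(cᵢ(x),0)`
(indices with `i.val < mbar` are the equality constraints). -/
def vmeas (mbar : ℕ) (c : Fin m → Evec n → ℝ) (x : Evec n) : ℝ :=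
  ∑ i : Fin m, if (i : ℕ) < mbar then |c i x| else max (c i x) 0

/-- Exact penalty function `φ(x,ρ) = ρ f(x) + v(x)`. -/
def phipen (mbar : ℕ) (f : Evec n → ℝ) (c : Fin m → Evec n → ℝ) (x : Evec n) (ρ : ℝ) : ℝ :=
  ρ * f x + vmeas mbar c x

/-- Linearized model
`l(d,ρ;x) = ρ⟨∇f(x),d⟩ + Σ_{i≤m̄} |cᵢ(x)+⟨∇cᵢ(x),d⟩| + Σ_{i>m̄} max(cᵢ(x)+⟨∇cᵢ(x),d⟩,0)`. -/
def lmod (mbar : ℕ) (f : Evec n → ℝ) (c : Fin m → Evec n → ℝ) (x : Evec n) (ρ : ℝ)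
    (d : Evec n) : ℝ :=
  ρ * ⟪gradient f x, d⟫ +
    ∑ i : Fin m, if (i : ℕ) < mbar then |c i x + ⟪gradient (c i) x, d⟫|
      else max (c i x + ⟪gradient (c i) x, d⟫) 0

/-- Model reduction `Δl(d,ρ;x) = l(0,ρ;x) − l(d,ρ;x)`. -/
def Deltal (mbar : ℕ) (f : Evec n → ℝ) (c : Fin m → Evec n → ℝ) (x : Evec n) (ρ : ℝ)
    (d : Evec n) : ℝ :=
  lmod mbar f c x ρ 0 - lmod mbar f c x ρ d

/-- Let `x` be feasible (`v(x)=0`), `ρ > 0`, `H` symmetric positive semidefinite,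
and `X` convex with `0` in its interior.  Suppose `d = 0` minimizes
`J(d,ρ;x) = ρ⟨∇f(x),d⟩ + ½⟨d,Hd⟩ + Σ_{i≤m̄}|cᵢ(x)+⟨∇cᵢ(x),d⟩| + Σ_{i>m̄}max(cᵢ(x)+⟨∇cᵢ(x),d⟩,0)`
over `d ∈ X`.  Then `x` is a KKT point of the NLP: there exists `λ ∈ ℝᵐ` with
`∇f(x) + Σᵢ λᵢ∇cᵢ(x) = 0`, `λᵢ ≥ 0` and `λᵢcᵢ(x) = 0` for every inequality index `i`. -/
theorem statement_12
    (n m mbar : ℕ) (hn : 1 ≤ n) (hmm : mbar ≤ m)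
    (f : Evec n → ℝ) (c : Fin m → Evec n → ℝ)
    (hf : ContDiff ℝ 1 f) (hc : ∀ i, ContDiff ℝ 1 (c i))
    (x : Evec n) (hfeas : vmeas mbar c x = 0)
    (ρ : ℝ) (hρ : 0 < ρ)
    (H : Matrix (Fin n) (Fin n) ℝ) (hH : H.PosSemidef)
    (X : Set (Evec n)) (hXcv : Convex ℝ X) (hX0 : (0 : Evec n) ∈ interior X)
    (hmin : ∀ d ∈ X,
      lmod mbar f c x ρ 0 + (1/2) * ⟪(0 : Evec n), matApply H 0⟫
        ≤ lmod mbar f c x ρ d + (1/2) * ⟪d, matApply H d⟫) :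
    ∃ lam : Fin m → ℝ,
      gradient f x + ∑ i, lam i • gradient (c i) x = 0 ∧
      ∀ i : Fin m, mbar ≤ (i : ℕ) → 0 ≤ lam i ∧ lam i * c i x = 0 := by
  classical
  -- feasibility facts
  have hterm : ∀ i : Fin m, (if (i : ℕ) < mbar then |c i x| else max (c i x) 0) = 0 := by
    have h0 : ∀ i ∈ (Finset.univ : Finset (Fin m)),
        (0:ℝ) ≤ (if (i : ℕ) < mbar then |c i x| else max (c i x) 0) := by
      intro i _
      split
      · exact abs_nonneg _
      · exact le_max_right _ _
    intro i
    exact (Finset.sum_eq_zero_iff_of_nonneg h0).mp hfeas i (Finset.mem_univ i)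
  have hceq : ∀ i : Fin m, (i : ℕ) < mbar → c i x = 0 := by
    intro i hi
    have h := hterm i
    rw [if_pos hi] at h
    exact abs_eq_zero.mp h
  have hcle : ∀ i : Fin m, ¬((i : ℕ) < mbar) → c i x ≤ 0 := by
    intro i hi
    have h := hterm i
    rw [if_neg hi] at h
    exact max_eq_right_iff.mp h
  set s : Evec n → Fin m → ℝ := fun d i =>
    if (i : ℕ) < mbar then |⟪gradient (c i) x, d⟫|
    else if c i x = 0 then max ⟪gradient (c i) x, d⟫ 0 else 0 with hs
  have hl0 : lmod mbar f c x ρ 0 = 0 := by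
    unfold lmod
    simp only [inner_zero_right, mul_zero, add_zero, zero_add]
    unfold vmeas at hfeas
    exact hfeas
  -- Key inequality: nonnegative directional derivative
  have hkey : ∀ d : Evec n, 0 ≤ ρ * ⟪gradient f x, d⟫ + ∑ i, s d i := by
    intro d
    set A : ℝ := ρ * ⟪gradient f x, d⟫ + ∑ i, s d i with hA
    set q : ℝ := ⟪d, matApply H d⟫ with hq
    have hlim : Tendsto (fun t : ℝ => A + t / 2 * q) (𝓝[>] (0:ℝ)) (𝓝 A) := by
      have h1 : Tendsto (fun t : ℝ => A + t / 2 * q) (𝓝 (0:ℝ)) (𝓝 (A + 0 / 2 * q)) := by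
        apply Continuous.tendsto
        fun_prop
      simpa using h1.mono_left nhdsWithin_le_nhds
    have ev1 : ∀ᶠ t : ℝ in 𝓝[>] (0:ℝ), t • d ∈ X := by
      have hsd : Tendsto (fun t : ℝ => t • d) (𝓝[>] (0:ℝ)) (𝓝 (0 : Evec n)) := by
        have hco : Continuous fun t : ℝ => t • d := by fun_prop
        have h2 := hco.tendsto 0
        simp only [zero_smul] at h2
        exact h2.mono_left nhdsWithin_le_nhds
      have h3 : ∀ᶠ t : ℝ in 𝓝[>] (0:ℝ), t • d ∈ interior X :=
        hsd.eventually_mem (isOpen_interior.mem_nhds hX0)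
      exact h3.mono fun t ht => interior_subset ht
    have ev2 : ∀ᶠ t : ℝ in 𝓝[>] (0:ℝ), ∀ i : Fin m,
        (¬((i : ℕ) < mbar) ∧ c i x ≠ 0) → c i x + t * ⟪gradient (c i) x, d⟫ ≤ 0 := by
      rw [Filter.eventually_all]
      intro i
      by_cases hcond : ¬((i : ℕ) < mbar) ∧ c i x ≠ 0
      · have hneg : c i x < 0 := lt_of_le_of_ne (hcle i hcond.1) hcond.2
        have h4 : Tendsto (fun t : ℝ => c i x + t * ⟪gradient (c i) x, d⟫) (𝓝 (0:ℝ))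
            (𝓝 (c i x + 0 * ⟪gradient (c i) x, d⟫)) := by
          apply Continuous.tendsto
          fun_prop
        have h5 : ∀ᶠ t : ℝ in 𝓝 (0:ℝ), c i x + t * ⟪gradient (c i) x, d⟫ < 0 := by
          apply h4.eventually_lt_const
          simpa using hneg
        exact ((h5.mono fun t ht => fun _ => ht.le).filter_mono nhdsWithin_le_nhds)
      · exact Eventually.of_forall fun t ht => absurd ht hcond
    have ev3 : ∀ᶠ t : ℝ in 𝓝[>] (0:ℝ), (0:ℝ) < t := self_mem_nhdsWithin
    have hev : ∀ᶠ t : ℝ in 𝓝[>] (0:ℝ), 0 ≤ A + t / 2 * q := by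
      filter_upwards [ev1, ev2, ev3] with t htX htineq htpos
      have hm := hmin (t • d) htX
      rw [hl0] at hm
      have hz : ⟪(0 : Evec n), matApply H 0⟫ = (0:ℝ) := inner_zero_left _
      rw [hz] at hm
      have hquad : ⟪t • d, matApply H (t • d)⟫ = t * (t * q) := by
        have hms : matApply H (t • d) = t • matApply H d := by
          unfold matApply
          exact map_smul _ _ _
        rw [hms, real_inner_smul_left, real_inner_smul_right, hq]
      have hlin : lmod mbar f c x ρ (t • d) = t * A := by
        unfold lmod
        rw [hA, mul_add, Finset.mul_sum, real_inner_smul_right]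
        congr 1
        · ring
        · apply Finset.sum_congr rfl
          intro i _
          rw [real_inner_smul_right]
          by_cases hi : (i : ℕ) < mbar
          · rw [if_pos hi, hceq i hi, zero_add]
            simp only [hs, if_pos hi]
            rw [abs_mul, abs_of_pos htpos]
          · rw [if_neg hi]
            by_cases hci : c i x = 0
            · rw [hci, zero_add]
              simp only [hs, if_neg hi, if_pos hci]
              rw [mul_max_of_nonneg _ _ htpos.le, mul_zero]
            · simp only [hs, if_neg hi, if_neg hci]
              rw [mul_zero, max_eq_right (htineq i ⟨hi, hci⟩)]
      rw [hlin, hquad] at hm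
      have h6 : t * 0 ≤ t * (A + t / 2 * q) := by
        rw [mul_zero]
        nlinarith [hm]
      exact le_of_mul_le_mul_left h6 htpos
    exact ge_of_tendsto hlim hev
  -- The compact convex set of achievable multiplier combinations
  set Bset : Set (Fin m → ℝ) := Set.univ.pi (fun i =>
    if (i : ℕ) < mbar then Set.Icc (-1:ℝ) 1
    else if c i x = 0 then Set.Icc (0:ℝ) 1 else {0}) with hBset
  have hBcomp : IsCompact Bset := by
    apply isCompact_univ_pi
    intro i
    split
    · exact isCompact_Icc
    · split
      · exact isCompact_Icc
      · exact isCompact_singleton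
  have hBconv : Convex ℝ Bset := by
    apply convex_pi
    intro i _
    split
    · exact convex_Icc _ _
    · split
      · exact convex_Icc _ _
      · exact convex_singleton _
  set Tl : (Fin m → ℝ) →ₗ[ℝ] Evec n :=
    { toFun := fun μ => ∑ i, μ i • gradient (c i) x
      map_add' := by
        intro μ ν
        simp [add_smul, Finset.sum_add_distrib]
      map_smul' := by
        intro r μ
        simp [smul_smul, Finset.smul_sum] } with hTl
  set K : Set (Evec n) := Tl '' Bset with hK
  have hKconv : Convex ℝ K := hBconv.linear_image Tl
  have hKcomp : IsCompact K := hBcomp.image Tl.continuous_of_finiteDimensional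
  have hmem : (-ρ) • gradient f x ∈ K := by
    by_contra hnot
    obtain ⟨φ, u, hu1, hu2⟩ :=
      geometric_hahn_banach_closed_point hKconv hKcomp.isClosed hnot
    set d : Evec n := (InnerProductSpace.toDual ℝ (Evec n)).symm φ with hd
    have hdip : ∀ y : Evec n, ⟪y, d⟫ = φ y := by
      intro y
      rw [real_inner_comm]
      exact InnerProductSpace.toDual_symm_apply
    set μ : Fin m → ℝ := fun i =>
      if (i : ℕ) < mbar then (if 0 ≤ φ (gradient (c i) x) then 1 else -1)
      else if c i x = 0 then (if 0 ≤ φ (gradient (c i) x) then 1 else 0) else 0 with hμ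
    have hμB : μ ∈ Bset := by
      rw [hBset, Set.mem_univ_pi]
      intro i
      simp only [hμ]
      split
      · split <;> norm_num
      · split
        · split <;> norm_num
        · norm_num
    have hTμ : φ (Tl μ) = ∑ i, s d i := by
      have h7 : Tl μ = ∑ i, μ i • gradient (c i) x := rfl
      rw [h7, map_sum]
      apply Finset.sum_congr rfl
      intro i _
      rw [map_smul, smul_eq_mul]
      simp only [hs, hμ]
      rw [hdip (gradient (c i) x)]
      by_cases hi : (i : ℕ) < mbar
      · simp only [if_pos hi]
        by_cases hpos : 0 ≤ φ (gradient (c i) x)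
        · rw [if_pos hpos, one_mul, abs_of_nonneg hpos]
        · rw [if_neg hpos, abs_of_neg (not_le.mp hpos)]
          ring
      · simp only [if_neg hi]
        by_cases hci : c i x = 0
        · simp only [if_pos hci]
          by_cases hpos : 0 ≤ φ (gradient (c i) x)
          · rw [if_pos hpos, one_mul, max_eq_left hpos]
          · rw [if_neg hpos, zero_mul, max_eq_right (not_le.mp hpos).le]
        · simp only [if_neg hci]
          ring
    have hu1' : φ (Tl μ) < u := hu1 (Tl μ) ⟨μ, hμB, rfl⟩
    have hu2' : u < -ρ * φ (gradient f x) := by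
      have : φ ((-ρ) • gradient f x) = -ρ * φ (gradient f x) := by
        rw [map_smul, smul_eq_mul]
      rw [this] at hu2
      exact hu2
    have hkd := hkey d
    rw [hdip (gradient f x)] at hkd
    rw [hTμ] at hu1'
    linarith
  obtain ⟨μ, hμB, hTeq⟩ := hmem
  refine ⟨fun i => μ i / ρ, ?_, ?_⟩
  · have hsum : ∑ i, (μ i / ρ) • gradient (c i) x = ρ⁻¹ • ∑ i, μ i • gradient (c i) x := by
      rw [Finset.smul_sum]
      apply Finset.sum_congr rfl
      intro i _
      rw [smul_smul]
      congr 1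
      rw [div_eq_inv_mul]
    have hTeq' : ∑ i, μ i • gradient (c i) x = (-ρ) • gradient f x := hTeq
    rw [hsum, hTeq', smul_smul]
    have hρ' : ρ⁻¹ * (-ρ) = -1 := by
      field_simp
    rw [hρ', neg_one_smul]
    simp
  · intro i hi
    have hiB : μ i ∈ (if (i : ℕ) < mbar then Set.Icc (-1:ℝ) 1
        else if c i x = 0 then Set.Icc (0:ℝ) 1 else ({0} : Set ℝ)) := by
      rw [hBset, Set.mem_univ_pi] at hμB
      exact hμB i
    rw [if_neg (not_lt.mpr hi)] at hiB
    by_cases hci : c i x = 0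
    · rw [if_pos hci] at hiB
      exact ⟨div_nonneg hiB.1 hρ.le, by rw [hci, mul_zero]⟩
    · rw [if_neg hci] at hiB
      have hμ0 : μ i = 0 := hiB
      constructor
      · simp [hμ0]
      · simp [hμ0]
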